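/- With G, g, J as above, if additionally there is a constant C such that J(2^n) ≥ −C for all but finitely many n, then the Hilberg exponents are equal: hilb(n ↦ G(n) − n·g) = hilb(J). -/

import Mathlib

/-!
Along the dyadic scale put `d n = G (2 ^ n) - 2 ^ n g`, so that `J (2 ^ n) = 2 d n - d (n + 1)`.
Since `d n / 2 ^ n → 0`, the series `∑ₖ J (2 ^ (n + k)) / 2 ^ (k + 1)` telescopes to `d n`.
Summing a bound `J (2 ^ k) ≤ B x ^ k` with `x < 2` through it gives `d n ≤ B x ^ n / (2 - x)`:
with `x = 2 ^ c` this yields `hilb (G n - n g) ≤ hilb J`, and applied to `-d` with `x = 1` it turns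
`J ≥ -C` into `d ≥ -C`, whence `J (2 ^ n) ≤ 2 d n + C` and the reverse inequality.
-/

noncomputable def logPlus (x : ℝ) : ℝ := if 0 ≤ x then Real.log (x + 1) else 0

noncomputable def hilb (s : ℕ → ℝ) : ℝ :=
  Filter.limsup (fun n : ℕ => logPlus (s (2 ^ n)) / (n * Real.log 2)) Filter.atTop

open Filter Real Finset Topology

noncomputable def hilbExponent (a : ℕ → ℝ) : ℝ :=
  limsup (fun n : ℕ => logPlus (a n) / (n * log 2)) atTop

theorem hilb_eq_hilbExponent (s : ℕ → ℝ) : hilb s = hilbExponent (fun n => s (2 ^ n)) := rfl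

section logPlus

theorem logPlus_nonneg (y : ℝ) : 0 ≤ logPlus y := by
  unfold logPlus
  split_ifs with hy
  · exact log_nonneg (by linarith)
  · exact le_rfl

theorem logPlus_le_log_add_mul_log {x y B : ℝ} {n : ℕ} (hx : 1 ≤ x) (h : y ≤ B * x ^ n) :
    logPlus y ≤ log (|B| + 1) + n * log x := by
  have hxn : 1 ≤ x ^ n := one_le_pow₀ hx
  have hrhs : log ((|B| + 1) * x ^ n) = log (|B| + 1) + n * log x := by
    rw [log_mul (by positivity) (by positivity), log_pow]
  unfold logPlus
  split_ifs with hy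
  · rw [← hrhs]
    refine log_le_log (by linarith) ?_
    nlinarith [le_abs_self B]
  · exact hrhs ▸ log_nonneg (by nlinarith [abs_nonneg B])

theorem lt_of_logPlus_lt_log {y z : ℝ} (hz : 0 < z) (h : logPlus y < log z) : y < z := by
  unfold logPlus at h
  split_ifs at h with hy
  · linarith [(log_lt_log_iff (by linarith) hz).mp h]
  · linarith

end logPlus

section hilbExponent

variable {a b : ℕ → ℝ} {B x : ℝ}

theorem eventually_logPlus_div_le (hx : 1 ≤ x) (h : ∀ᶠ n in atTop, a n ≤ B * x ^ n) :
    ∀ᶠ n : ℕ in atTop,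
      logPlus (a n) / (n * log 2) ≤ log (|B| + 1) / (n * log 2) + logb 2 x := by
  filter_upwards [h, eventually_ge_atTop 1] with n hn hn1
  have hpos : 0 < (n : ℝ) * log 2 := mul_pos (by exact_mod_cast hn1) (log_pos one_lt_two)
  calc logPlus (a n) / (n * log 2) ≤ (log (|B| + 1) + n * log x) / (n * log 2) := by
        gcongr
        exact logPlus_le_log_add_mul_log hx hn
    _ = log (|B| + 1) / (n * log 2) + logb 2 x := by
        rw [add_div, logb]
        field_simp

theorem tendsto_div_mul_log_two_add (K c : ℝ) :
    Tendsto (fun n : ℕ => K / (n * log 2) + c) atTop (𝓝 c) := by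
  simpa using (tendsto_const_nhds.div_atTop
    (tendsto_natCast_atTop_atTop.atTop_mul_const (log_pos one_lt_two))).add_const c

theorem isBoundedUnder_logPlus_div (hx : 1 ≤ x) (h : ∀ᶠ n in atTop, a n ≤ B * x ^ n) :
    IsBoundedUnder (· ≤ ·) atTop (fun n : ℕ => logPlus (a n) / (n * log 2)) :=
  (tendsto_div_mul_log_two_add _ _).isBoundedUnder_le.mono_le (eventually_logPlus_div_le hx h)

theorem hilbExponent_le_logb (hx : 1 ≤ x) (h : ∀ᶠ n in atTop, a n ≤ B * x ^ n) :
    hilbExponent a ≤ logb 2 x := by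
  have hcobdd : IsCoboundedUnder (· ≤ ·) atTop (fun n : ℕ => logPlus (a n) / (n * log 2)) :=
    isCoboundedUnder_le_of_le atTop fun n => div_nonneg (logPlus_nonneg _) (by positivity)
  rw [← (tendsto_div_mul_log_two_add (log (|B| + 1)) (logb 2 x)).limsup_eq]
  exact limsup_le_limsup (eventually_logPlus_div_le hx h) hcobdd
    (tendsto_div_mul_log_two_add _ _).isBoundedUnder_le

theorem hilbExponent_le_of_eventually_le_mul_two_rpow_pow {c : ℝ} (hc : 0 ≤ c)
    (h : ∀ᶠ n in atTop, a n ≤ B * ((2 : ℝ) ^ c) ^ n) : hilbExponent a ≤ c :=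
  logb_rpow (b := 2) (x := c) two_pos (by norm_num) ▸
    hilbExponent_le_logb (one_le_rpow one_le_two hc) h

theorem hilbExponent_nonneg (hx : 1 ≤ x) (h : ∀ᶠ n in atTop, a n ≤ B * x ^ n) :
    0 ≤ hilbExponent a :=
  le_limsup_of_frequently_le (Frequently.of_forall fun _ => div_nonneg (logPlus_nonneg _)
    (by positivity)) (isBoundedUnder_logPlus_div hx h)

theorem eventually_le_of_hilbExponent_lt {c : ℝ} (hx : 1 ≤ x)
    (h : ∀ᶠ n in atTop, a n ≤ B * x ^ n) (hc : hilbExponent a < c) :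
    ∀ᶠ n in atTop, a n ≤ (2 ^ c) ^ n := by
  filter_upwards [eventually_lt_of_limsup_lt hc (isBoundedUnder_logPlus_div hx h),
    eventually_ge_atTop 1] with n hn hn1
  have hpos : 0 < (n : ℝ) * log 2 := mul_pos (by exact_mod_cast hn1) (log_pos one_lt_two)
  refine (lt_of_logPlus_lt_log (by positivity) ?_).le
  rw [log_pow, log_rpow two_pos]
  linarith [(div_lt_iff₀ hpos).mp hn]

theorem hilbExponent_le_of_eventually_le_mul_add {L K : ℝ} (hx : 1 ≤ x)
    (hb : ∀ᶠ n in atTop, b n ≤ B * x ^ n) (hL : 0 ≤ L)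
    (h : ∀ᶠ n in atTop, a n ≤ L * b n + K) : hilbExponent a ≤ hilbExponent b := by
  refine le_of_forall_gt_imp_ge_of_dense fun c hc => ?_
  have hc0 : 0 ≤ c := (hilbExponent_nonneg hx hb).trans hc.le
  refine hilbExponent_le_of_eventually_le_mul_two_rpow_pow (B := L + |K|) hc0 ?_
  filter_upwards [h, eventually_le_of_hilbExponent_lt hx hb hc] with n han hbn
  have hLb : L * b n ≤ L * (2 ^ c) ^ n := mul_le_mul_of_nonneg_left hbn hL
  have hK : K ≤ |K| * (2 ^ c) ^ n := (le_abs_self K).trans (le_mul_of_one_le_right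
    (abs_nonneg K) (one_le_pow₀ (one_le_rpow one_le_two hc0)))
  linarith

end hilbExponent

section dyadic

variable {d : ℕ → ℝ}

theorem tendsto_sum_range_defect_div (hd : Tendsto (fun n => d n / 2 ^ n) atTop (𝓝 0)) (n : ℕ) :
    Tendsto (fun m => ∑ k ∈ range m, (2 * d (n + k) - d (n + k + 1)) / 2 ^ (k + 1)) atTop
      (𝓝 (d n)) := by
  have hpartial : ∀ m, ∑ k ∈ range m, (2 * d (n + k) - d (n + k + 1)) / 2 ^ (k + 1)
      = d n - d (n + m) / 2 ^ m := by
    intro m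
    have := sum_range_sub' (fun k => d (n + k) / 2 ^ k) m
    simp only [add_zero, pow_zero, div_one, ← add_assoc] at this
    rw [← this]
    refine sum_congr rfl fun k _ => ?_
    rw [pow_succ]
    field_simp
  have htail : Tendsto (fun m => d (n + m) / 2 ^ m) atTop (𝓝 0) := by
    have := (hd.comp (tendsto_add_atTop_nat n)).const_mul (2 ^ n)
    rw [mul_zero] at this
    refine this.congr fun m => ?_
    rw [Function.comp_apply, add_comm m n, pow_add]
    field_simp
  simpa [hpartial] using tendsto_const_nhds.sub htail

theorem eventually_le_of_defect_le {B x : ℝ} (hd : Tendsto (fun n => d n / 2 ^ n) atTop (𝓝 0))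
    (hx0 : 0 ≤ x) (hx : x < 2) (h : ∀ᶠ k in atTop, 2 * d k - d (k + 1) ≤ B * x ^ k) :
    ∀ᶠ n in atTop, d n ≤ B / (2 - x) * x ^ n := by
  obtain ⟨N, hN⟩ := eventually_atTop.mp h
  filter_upwards [eventually_ge_atTop N] with n hn
  have hgeom : HasSum (fun k => B * x ^ (n + k) / 2 ^ (k + 1)) (B / (2 - x) * x ^ n) := by
    have hterm : (fun k => B * x ^ (n + k) / 2 ^ (k + 1)) = fun k => B * x ^ n / 2 * (x / 2) ^ k := by
      ext k
      rw [pow_add, pow_succ, div_pow]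
      field_simp
    have hsum : B / (2 - x) * x ^ n = B * x ^ n / 2 * (1 - x / 2)⁻¹ := by
      have : 2 - x ≠ 0 := by linarith
      field_simp
    rw [hterm, hsum]
    exact (hasSum_geometric_of_lt_one (div_nonneg hx0 zero_le_two)
      ((div_lt_one two_pos).mpr hx)).mul_left _
  refine le_of_tendsto_of_tendsto' (tendsto_sum_range_defect_div hd n) hgeom.tendsto_sum_nat
    fun m => sum_le_sum fun k _ => ?_
  gcongr
  exact hN (n + k) (by omega)

theorem tendsto_defect_div_two_pow (hd : Tendsto (fun n => d n / 2 ^ n) atTop (𝓝 0)) :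
    Tendsto (fun n => (2 * d n - d (n + 1)) / 2 ^ n) atTop (𝓝 0) := by
  have := (hd.const_mul 2).sub ((hd.comp (tendsto_add_atTop_nat 1)).const_mul 2)
  simp only [mul_zero, sub_zero] at this
  refine this.congr fun n => ?_
  simp only [Function.comp_apply, pow_succ]
  field_simp

theorem eventually_le_two_pow {a : ℕ → ℝ} (ha : Tendsto (fun n => a n / 2 ^ n) atTop (𝓝 0)) :
    ∀ᶠ n in atTop, a n ≤ 1 * 2 ^ n := by
  filter_upwards [ha.eventually_lt_const zero_lt_one] with n hn
  rw [one_mul]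
  exact ((div_lt_one (by positivity)).mp hn).le

theorem hilbExponent_le_hilbExponent_defect (hd : Tendsto (fun n => d n / 2 ^ n) atTop (𝓝 0)) :
    hilbExponent d ≤ hilbExponent (fun n => 2 * d n - d (n + 1)) := by
  have hdj := eventually_le_two_pow (tendsto_defect_div_two_pow hd)
  refine le_of_forall_gt_imp_ge_of_dense fun c hc => ?_
  rcases le_or_gt 1 c with hc1 | hc1
  · have := hilbExponent_le_logb one_le_two (eventually_le_two_pow hd)
    rw [logb_self_eq_one one_lt_two] at this
    linarith
  have hc0 : 0 ≤ c := (hilbExponent_nonneg one_le_two hdj).trans hc.le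
  have hj := eventually_le_of_hilbExponent_lt one_le_two hdj hc
  have h2c : (2 : ℝ) ^ c < 2 := by simpa using rpow_lt_rpow_of_exponent_lt one_lt_two hc1
  exact hilbExponent_le_of_eventually_le_mul_two_rpow_pow hc0 (eventually_le_of_defect_le hd
    (by positivity) h2c (hj.mono fun k hk => by rwa [one_mul]))

theorem hilbExponent_defect_le_hilbExponent {C : ℝ}
    (hd : Tendsto (fun n => d n / 2 ^ n) atTop (𝓝 0))
    (hC : ∀ᶠ n in atTop, -C ≤ 2 * d n - d (n + 1)) :
    hilbExponent (fun n => 2 * d n - d (n + 1)) ≤ hilbExponent d := by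
  have hlower : ∀ᶠ n in atTop, -C ≤ d n := by
    have := eventually_le_of_defect_le (d := fun n => -d n) (B := C) (x := 1)
      (by simpa [neg_div] using hd.neg) zero_le_one one_lt_two
      (hC.mono fun k hk => by rw [one_pow, mul_one]; linarith)
    filter_upwards [this] with n hn
    norm_num at hn
    linarith
  refine hilbExponent_le_of_eventually_le_mul_add (K := C) one_le_two
    (eventually_le_two_pow hd) zero_le_two ?_
  filter_upwards [(tendsto_add_atTop_nat 1).eventually hlower] with n hn
  linarith

end dyadic

theorem tendsto_sub_mul_div_two_pow {G : ℕ → ℝ} {g : ℝ}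
    (hg : Tendsto (fun n : ℕ => G n / n) atTop (𝓝 g)) :
    Tendsto (fun n => (G (2 ^ n) - 2 ^ n * g) / 2 ^ n) atTop (𝓝 0) := by
  have := (hg.comp (tendsto_pow_atTop_atTop_of_one_lt one_lt_two)).sub_const g
  rw [sub_self] at this
  refine this.congr fun n => ?_
  simp only [Function.comp_apply, Nat.cast_pow, Nat.cast_ofNat]
  field_simp

theorem hilberg_redundancy_eq (G : ℕ → ℝ) (g : ℝ)
    (hg : Filter.Tendsto (fun n : ℕ => G n / n) Filter.atTop (nhds g))
    (hJ : ∃ C : ℝ, ∀ᶠ n : ℕ in Filter.atTop,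
      2 * G (2 ^ n) - G (2 * 2 ^ n) ≥ -C) :
    hilb (fun n => G n - n * g) = hilb (fun n => 2 * G n - G (2 * n)) := by
  obtain ⟨C, hC⟩ := hJ
  set d : ℕ → ℝ := fun n => G (2 ^ n) - 2 ^ n * g
  have hdefect : ∀ n, 2 * G (2 ^ n) - G (2 * 2 ^ n) = 2 * d n - d (n + 1) := by
    intro n
    simp only [d, pow_succ']
    ring
  have hD : hilb (fun n => G n - n * g) = hilbExponent d := by
    simp only [hilb_eq_hilbExponent, Nat.cast_pow, Nat.cast_ofNat, d]
  rw [hD, hilb_eq_hilbExponent]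
  simp only [hdefect]
  have hd := tendsto_sub_mul_div_two_pow hg
  exact le_antisymm (hilbExponent_le_hilbExponent_defect hd)
    (hilbExponent_defect_le_hilbExponent hd (C := C) (hC.mono fun n hn => by rwa [hdefect] at hn))
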